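/- arXiv:1704.06478 — 2 statements merged into one kernel-verified Lean document; each statement's English description precedes it below -/
import Mathlib

section
/- For s ≥ 1 and m,n ≥ 0, ∂_{z,0}(A_s B̄_m e_z A_n) = A_s Ā_m e_z A_n − A_s B̄_{m+n} in ℚ⟨e_0,e_1,e_z⟩, where A_n = (e_1e_0)^n, Ā_n = (e_0e_1)^n, B̄_n = (e_0e_1)^n e_0. -/
open scoped BigOperators
open MeasureTheory Filter

noncomputable section

/-- Iterated integral over the open simplex `0 < t₁ < ⋯ < t_m < 1` of `∏ᵢ 1/(tᵢ - aᵢ)`. -/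
def itInt (a : List ℂ) : ℂ :=
  ∫ t in {t : Fin a.length → ℝ | StrictMono t ∧ ∀ i, t i ∈ Set.Ioo (0:ℝ) 1},
    ∏ i : Fin a.length, ((t i : ℂ) - a.get i)⁻¹

/-- Multiple zeta value attached to a list of exponents. -/
def mzv (k : List ℕ) : ℝ :=
  ∑' f : {f : Fin k.length → ℕ+ // StrictMono f},
    ∏ i : Fin k.length, (((f.1 i : ℕ) : ℝ) ^ (k.get i))⁻¹

/-- Letters: `0 ↦ e₀`, `1 ↦ e₁`, `2 ↦ e_z`. -/
abbrev Ltr := Fin 3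

/-- The free noncommutative algebra `ℚ⟨e₀,e₁,e_z⟩` realized as a monoid algebra. -/
abbrev Alg := MonoidAlgebra ℚ (FreeMonoid Ltr)

/-- The word (monomial) corresponding to a list of letters. -/
def wd (l : List Ltr) : Alg := MonoidAlgebra.of ℚ (FreeMonoid Ltr) (FreeMonoid.ofList l)

/-- Padded letter sequence: `a₀ = 0`, `a_{n+1} = 1`. -/
def pad (l : List Ltr) : ℕ → Ltr := fun i => (((0:Ltr) :: (l ++ [1])).getD i 0)

/-- Unordered-pair Kronecker delta. -/
def dl (a b c d : Ltr) : ℚ := if (a = c ∧ b = d) ∨ (a = d ∧ b = c) then 1 else 0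

/-- `∂_{z,b}` on a single word. -/
def delWord (b : Ltr) (l : List Ltr) : Alg :=
  ∑ i ∈ Finset.range l.length,
    (dl (pad l (i+1)) (pad l (i+2)) 2 b - dl (pad l i) (pad l (i+1)) 2 b) •
      wd (l.eraseIdx i)

/-- The linear operator `∂_{z,b}` on `ℚ⟨e₀,e₁,e_z⟩`. -/
def del (b : Ltr) : Alg →ₗ[ℚ] Alg :=
  Finsupp.lift Alg ℚ (FreeMonoid Ltr) (fun l => delWord b (FreeMonoid.toList l))
    ∘ₗ (MonoidAlgebra.coeffLinearEquiv ℚ).toLinearMap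

/-- Evaluation of letters at a point `z`. -/
def ev (z : ℂ) : Ltr → ℂ := fun i => if i = 0 then 0 else if i = 1 then 1 else z

/-- The linear map `L` (depending on `z`) given by iterated integrals. -/
def LL (z : ℂ) : Alg →ₗ[ℚ] ℂ :=
  Finsupp.lift ℂ ℚ (FreeMonoid Ltr) (fun l => itInt ((FreeMonoid.toList l).map (ev z)))
    ∘ₗ (MonoidAlgebra.coeffLinearEquiv ℚ).toLinearMap

/-- `A_n = (e₁e₀)^n`. -/
def Aw : ℕ → List Ltr
  | 0 => []
  | n+1 => 1 :: 0 :: Aw n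

/-- `B_n = (e₁e₀)^n e₁`. -/
def Bw (n : ℕ) : List Ltr := Aw n ++ [1]

/-- `Ā_n = (e₀e₁)^n`. -/
def Abar : ℕ → List Ltr
  | 0 => []
  | n+1 => 0 :: 1 :: Abar n

/-- `B̄_n = (e₀e₁)^n e₀`. -/
def Bbar (n : ℕ) : List Ltr := Abar n ++ [0]

/-- The single letter `e_z`. -/
def ezw : List Ltr := [2]

/-- Flip `e₀ ↔ e₁` (fixing `e_z`, which never occurs in duality words). -/
def flipL : Ltr → Ltr := fun i => if i = 0 then 1 else if i = 1 then 0 else 2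

/-- The duality anti-automorphism `τ` as a linear map. -/
def tau : Alg →ₗ[ℚ] Alg :=
  Finsupp.lift Alg ℚ (FreeMonoid Ltr)
    (fun l => ((-1 : ℚ) ^ (FreeMonoid.toList l).length) •
      wd (((FreeMonoid.toList l).reverse).map flipL))
    ∘ₗ (MonoidAlgebra.coeffLinearEquiv ℚ).toLinearMap

/-- `Δ(w) = w - τ(w)`. -/
def Del (x : Alg) : Alg := x - tau x

/-- The segment `[0,1] ⊂ ℂ`. -/
def seg : Set ℂ := (fun t : ℝ => (t : ℂ)) '' Set.Icc 0 1

/-- Admissibility of a word: it is empty, or starts with `e₁` or `e_z`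
and ends with `e₀` or `e_z`. -/
def adm (l : List Ltr) : Prop :=
  ∀ h : l ≠ [], (l.head h = 1 ∨ l.head h = 2) ∧ (l.getLast h = 0 ∨ l.getLast h = 2)

/-- The subspace `𝒜¹` spanned by admissible words. -/
def A1 : Submodule ℚ Alg := Submodule.span ℚ {x | ∃ l, adm l ∧ x = wd l}

/-- The span of words containing the letter `e_z` (the ideal `ℐ = 𝒜e_z𝒜`). -/
def Iz : Submodule ℚ Alg := Submodule.span ℚ {x | ∃ l : List Ltr, (2:Ltr) ∈ l ∧ x = wd l}

/-- `F_{ee}(m,n)`. -/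
def Fee (s : ℕ) (m n : ℤ) : Alg :=
  if m < 0 ∨ n < 0 then 0 else
  wd (Aw s ++ Bbar m.toNat ++ ezw ++ Aw n.toNat)
    + wd (Aw m.toNat ++ ezw ++ Aw s ++ ezw ++ Aw n.toNat)
    + wd (Aw m.toNat ++ ezw ++ Abar s ++ ezw ++ Aw n.toNat)
    + wd (Aw m.toNat ++ ezw ++ Bw n.toNat ++ Aw s)
    - wd (Bw (s + m.toNat) ++ ezw ++ Aw n.toNat)
    - wd (Aw m.toNat ++ ezw ++ Bbar (s + n.toNat))

/-- `F_{oe}(m,n)`. -/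
def Foe (s : ℕ) (m n : ℤ) : Alg :=
  if m < 0 ∨ n < 0 then 0 else
  wd (Aw s ++ Abar (m.toNat + 1) ++ ezw ++ Aw n.toNat)
    + wd (Bw m.toNat ++ ezw ++ Aw s ++ ezw ++ Aw n.toNat)
    + wd (Bw m.toNat ++ ezw ++ Abar s ++ ezw ++ Aw n.toNat)
    + wd (Bw m.toNat ++ ezw ++ Bw n.toNat ++ Aw s)
    - wd (Aw (s + m.toNat + 1) ++ ezw ++ Aw n.toNat)
    - wd (Bw m.toNat ++ ezw ++ Bbar (s + n.toNat))

/-- `F_{eo}(m,n)`. -/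
def Feo (s : ℕ) (m n : ℤ) : Alg :=
  if m < 0 ∨ n < 0 then 0 else
  wd (Aw s ++ Bbar m.toNat ++ ezw ++ Bbar n.toNat)
    + wd (Aw m.toNat ++ ezw ++ Aw s ++ ezw ++ Bbar n.toNat)
    + wd (Aw m.toNat ++ ezw ++ Abar s ++ ezw ++ Bbar n.toNat)
    + wd (Aw m.toNat ++ ezw ++ Abar (n.toNat + 1) ++ Aw s)
    - wd (Bw (s + m.toNat) ++ ezw ++ Bbar n.toNat)
    - wd (Aw m.toNat ++ ezw ++ Aw (s + n.toNat + 1))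

/-- `F_{oo}(m,n)`. -/
def Foo (s : ℕ) (m n : ℤ) : Alg :=
  if m < 0 ∨ n < 0 then 0 else
  wd (Aw s ++ Abar (m.toNat + 1) ++ ezw ++ Bbar n.toNat)
    + wd (Bw m.toNat ++ ezw ++ Aw s ++ ezw ++ Bbar n.toNat)
    + wd (Bw m.toNat ++ ezw ++ Abar s ++ ezw ++ Bbar n.toNat)
    + wd (Bw m.toNat ++ ezw ++ Abar (n.toNat + 1) ++ Aw s)
    - wd (Aw (s + m.toNat + 1) ++ ezw ++ Bbar n.toNat)
    - wd (Bw m.toNat ++ ezw ++ Aw (s + n.toNat + 1))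

/-! In the padded word `0 · A_s Ā_m e₀ e_z A_n · 1` the letter `e_z` occurs exactly once, preceded
by `e₀` and followed by `e₁`, so `{e_z, e₀}` is adjacent exactly once. Such an adjacency contributes
the word with its left letter erased minus the word with its right letter erased, here
`A_s Ā_m e_z A_n - A_s Ā_m e₀ A_n`, and `Ā_m e₀ A_n = B̄_{m+n}`. -/

lemma del_wd (b : Ltr) (l : List Ltr) : del b (wd l) = delWord b l := by
  simp [del, wd]

lemma List.getD_ne_of_notMem {α : Type*} {L : List α} {x d : α} (hL : x ∉ L) (hd : d ≠ x)
    (p : ℕ) : L.getD p d ≠ x := by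
  rw [List.getD_eq_getElem?_getD]
  cases h : L[p]? with
  | none => exact hd
  | some y => exact fun hy => hL (hy ▸ List.mem_of_getElem? h)

section SingleEz

variable {b : Ltr} {u v : List Ltr}

lemma pad_append_cons_cons_eq_two_iff (hb : b ≠ 2) (hu : 2 ∉ u) (hv : 2 ∉ v) (p : ℕ) :
    pad (u ++ b :: 2 :: v) p = 2 ↔ p = u.length + 2 := by
  -- `pad l (i + 1)` is the `i`-th letter of `l`, so `e_z` sits at padded index `u.length + 2`
  have hsplit : (0 : Ltr) :: (u ++ b :: 2 :: v ++ [1]) = (0 :: u ++ [b]) ++ 2 :: (v ++ [1]) := by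
    simp
  have hlen : (0 :: u ++ [b] : List Ltr).length = u.length + 2 := by simp
  rw [pad, hsplit]
  rcases lt_trichotomy p (u.length + 2) with hp | rfl | hp
  · rw [List.getD_append _ _ _ _ (hlen ▸ hp)]
    refine iff_of_false (List.getD_ne_of_notMem ?_ (by decide) p) hp.ne
    simp [hu, hb.symm]
  · rw [List.getD_append_right _ _ _ _ hlen.le, hlen, Nat.sub_self]; simp
  · rw [List.getD_append_right _ _ _ _ (hlen ▸ hp.le), hlen]
    obtain ⟨q, hq⟩ : ∃ q, p - (u.length + 2) = q + 1 := ⟨p - (u.length + 3), by omega⟩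
    rw [hq, List.getD_cons_succ]
    refine iff_of_false (List.getD_ne_of_notMem ?_ (by decide) q) hp.ne'
    simp [hv]

lemma dl_pad_append_cons_cons (hb : b ≠ 2) (hu : 2 ∉ u) (hv : 2 ∉ v) (hv₀ : v.headD 1 ≠ b)
    (p : ℕ) :
    dl (pad (u ++ b :: 2 :: v) p) (pad (u ++ b :: 2 :: v) (p + 1)) 2 b =
      if p = u.length + 1 then 1 else 0 := by
  have htwo := pad_append_cons_cons_eq_two_iff hb hu hv
  have hbefore : pad (u ++ b :: 2 :: v) (u.length + 1) = b := by simp [pad]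
  have hafter : pad (u ++ b :: 2 :: v) (u.length + 3) = v.headD 1 := by
    cases v <;> simp [pad]
  split_ifs with hp
  · simp [dl, hp, hbefore, (htwo _).2 rfl]
  · rw [dl, if_neg]
    rintro (⟨h2, hnext⟩ | ⟨-, h2⟩)
    · obtain rfl := (htwo p).1 h2
      exact hv₀ (hafter ▸ hnext)
    · exact hp (by have := (htwo _).1 h2; omega)

theorem delWord_append_cons_cons (hb : b ≠ 2) (hu : 2 ∉ u) (hv : 2 ∉ v) (hv₀ : v.headD 1 ≠ b) :
    delWord b (u ++ b :: 2 :: v) = wd (u ++ 2 :: v) - wd (u ++ b :: v) := by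
  have hcoef (i : ℕ) :
      dl (pad (u ++ b :: 2 :: v) (i + 1)) (pad (u ++ b :: 2 :: v) (i + 2)) 2 b
        - dl (pad (u ++ b :: 2 :: v) i) (pad (u ++ b :: 2 :: v) (i + 1)) 2 b
        = (if i = u.length then 1 else 0) - (if i = u.length + 1 then 1 else 0) := by
    rw [dl_pad_append_cons_cons hb hu hv hv₀, dl_pad_append_cons_cons hb hu hv hv₀]
    simp
  simp only [delWord, hcoef, sub_smul, ite_smul, one_smul, zero_smul, Finset.sum_sub_distrib,
    Finset.sum_ite_eq', Finset.mem_range]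
  rw [if_pos (by simp), if_pos (by simp), List.eraseIdx_append_of_length_le le_rfl,
    List.eraseIdx_append_of_length_le (Nat.le_succ _)]
  simp

end SingleEz

lemma two_notMem_Aw (n : ℕ) : (2 : Ltr) ∉ Aw n := by
  induction n with
  | zero => simp [Aw]
  | succ n ih => simp [Aw, ih]

lemma two_notMem_Abar (n : ℕ) : (2 : Ltr) ∉ Abar n := by
  induction n with
  | zero => simp [Abar]
  | succ n ih => simp [Abar, ih]

lemma headD_Aw (n : ℕ) : (Aw n).headD 1 = 1 := by
  cases n <;> rfl

lemma zero_cons_Aw (n : ℕ) : 0 :: Aw n = Bbar n := by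
  induction n with
  | zero => rfl
  | succ n ih =>
    change 0 :: 1 :: 0 :: Aw n = 0 :: 1 :: Bbar n
    rw [ih]

lemma Abar_append_zero_cons_Aw (m n : ℕ) : Abar m ++ 0 :: Aw n = Bbar (m + n) := by
  induction m with
  | zero => simp [Abar, zero_cons_Aw]
  | succ m ih => simp [Abar, Bbar, Nat.succ_add, ih]

theorem del0_AsBbar_general (s m n : ℕ) :
    del 0 (wd (Aw s ++ Bbar m ++ ezw ++ Aw n)) =
      wd (Aw s ++ Abar m ++ ezw ++ Aw n) - wd (Aw s ++ Bbar (m + n)) := by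
  have hsplit : Aw s ++ Bbar m ++ ezw ++ Aw n = (Aw s ++ Abar m) ++ 0 :: 2 :: Aw n := by
    simp [Bbar, ezw]
  rw [hsplit, del_wd, delWord_append_cons_cons (by decide)
    (by simp [two_notMem_Aw, two_notMem_Abar]) (two_notMem_Aw n) (by rw [headD_Aw]; decide),
    List.append_assoc _ _ (0 :: _), Abar_append_zero_cons_Aw]
  simp [ezw]

/-- `∂_{z,0}(A_s B̄_m e_z A_n) = A_s Ā_m e_z A_n - A_s B̄_{m+n}`. -/
theorem del0_AsBbar (s m n : ℕ) (hs : 1 ≤ s) :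
    del 0 (wd (Aw s ++ Bbar m ++ ezw ++ Aw n)) =
      wd (Aw s ++ Abar m ++ ezw ++ Aw n) - wd (Aw s ++ Bbar (m + n)) :=
  del0_AsBbar_general s m n

end
end

section
/- For s ≥ 1 and m,n ≥ 0 with m > 0: ∂_{z,0}(A_m e_z (A_s + Ā_s) e_z A_n) = B_{m−1} e_z (A_s + Ā_s) e_z A_n − A_{s+m} e_z A_n − A_m e_z A_{s+n}; and for m = 0: ∂_{z,0}(e_z (A_s + Ā_s) e_z A_n) = −A_s e_z A_n − e_z A_{s+n}. -/
open scoped BigOperators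
open MeasureTheory Filter

noncomputable section

/-!
The coefficient of a deletion in `∂_{z,0}` depends only on the two neighbours of the deleted
letter and vanishes unless one of them forms the pair `{e_z, e₀}` with it. Hence `∂_{z,0}` is
computed by peeling letters off the front of a word: a letter `e₀` or `e₁` not followed by `e_z`
commutes with `∂_{z,0}`, and each junction with an `e_z` contributes one explicit deletion term.
Adding the words with `A_s` and `Ā_s` in the middle, the terms `± A_m e_z B_{s-1} e_z A_n`
obtained by deleting the last `e₀` of `A_s` and the first `e₀` of `Ā_s` cancel.
-/

lemma wd_append (u v : List Ltr) : wd (u ++ v) = wd u * wd v := by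
  simp [wd, FreeMonoid.ofList_append]

lemma wd_cons (x : Ltr) (l : List Ltr) : wd (x :: l) = wd [x] * wd l := by
  rw [← wd_append, List.singleton_append]

lemma delWord_nil (b : Ltr) : delWord b [] = 0 := by
  simp [delWord]

lemma delWord_singleton (b x : Ltr) :
    delWord b [x] = (dl x 1 2 b - dl 0 x 2 b) • wd [] := by
  simp [delWord, pad]

lemma delWord_cons_cons (b x y : Ltr) (t : List Ltr) :
    delWord b (x :: y :: t) =
      (dl x y 2 b - dl 0 x 2 b) • wd (y :: t) + wd [x] * delWord b (y :: t)
        + (dl 0 y 2 b - dl x y 2 b) • wd (x :: t) := by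
  rw [delWord, delWord]
  simp only [List.length_cons, Finset.sum_range_succ' _ (t.length + 1),
    Finset.sum_range_succ' _ t.length, mul_add, Finset.mul_sum, mul_smul_comm, ← wd_cons]
  simp only [pad, List.cons_append, List.getD_cons_succ, List.getD_cons_zero,
    List.eraseIdx_cons_succ, List.eraseIdx_cons_zero]
  module

lemma dl_eq_zero_of_ne_ez (x y : Ltr) (hx : x ≠ 2) (hy : y ≠ 2) : dl x y 2 0 = 0 := by
  simp [dl, hx, hy]

lemma delWord_zero_cons_of_ne_ez (x : Ltr) (l : List Ltr) (hx : x ≠ 2) (hl : l.headD 1 ≠ 2) :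
    delWord 0 (x :: l) = wd [x] * delWord 0 l := by
  cases l with
  | nil => simp [delWord_singleton, delWord_nil, dl_eq_zero_of_ne_ez, hx]
  | cons y t =>
    have hy : y ≠ 2 := hl
    simp [delWord_cons_cons, dl_eq_zero_of_ne_ez _ _ hx hy,
      dl_eq_zero_of_ne_ez 0 _ (by decide) hx, dl_eq_zero_of_ne_ez 0 _ (by decide) hy]

lemma delWord_zero_e0_ez (t : List Ltr) :
    delWord 0 (0 :: 2 :: t) = wd (2 :: t) + wd [0] * delWord 0 (2 :: t) := by
  simp [delWord_cons_cons, dl]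

lemma delWord_zero_e1_ez (t : List Ltr) :
    delWord 0 (1 :: 2 :: t) = wd [1] * delWord 0 (2 :: t) + wd (1 :: t) := by
  simp [delWord_cons_cons, dl]

lemma delWord_zero_ez_e0 (t : List Ltr) :
    delWord 0 (2 :: 0 :: t) = wd [2] * delWord 0 (0 :: t) - wd (2 :: t) := by
  simp [delWord_cons_cons, dl, sub_eq_add_neg]

lemma delWord_zero_ez_ez (t : List Ltr) :
    delWord 0 (2 :: 2 :: t) = wd [2] * delWord 0 (2 :: t) := by
  simp [delWord_cons_cons, dl]

lemma delWord_zero_ez_cons_of_headD_eq_one (l : List Ltr) (hl : l.headD 1 = 1) :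
    delWord 0 (2 :: l) = -wd l + wd [2] * delWord 0 l := by
  cases l with
  | nil => simp [delWord_singleton, delWord_nil, dl]
  | cons y t =>
    obtain rfl : y = 1 := hl
    simp [delWord_cons_cons, dl]

lemma Aw_add (a b : ℕ) : Aw (a + b) = Aw a ++ Aw b := by
  induction a with
  | zero => simp [Aw]
  | succ k ih => rw [Nat.add_right_comm, Aw, Aw, ih, List.cons_append, List.cons_append]

lemma one_cons_Abar (k : ℕ) : (1 : Ltr) :: Abar k = Bw k := by
  induction k with
  | zero => rfl
  | succ k ih =>
    show (1 : Ltr) :: 0 :: (1 :: Abar k) = Bw (k + 1)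
    rw [ih]
    rfl

lemma delWord_zero_Aw (n : ℕ) : delWord 0 (Aw n) = 0 := by
  induction n with
  | zero => exact delWord_nil 0
  | succ k ih =>
    rw [Aw, delWord_zero_cons_of_ne_ez 1 _ (by decide) (by simp),
      delWord_zero_cons_of_ne_ez 0 _ (by decide) (by rw [headD_Aw]; decide), ih, mul_zero, mul_zero]

lemma delWord_zero_ez_Aw (n : ℕ) : delWord 0 (2 :: Aw n) = -wd (Aw n) := by
  rw [delWord_zero_ez_cons_of_headD_eq_one _ (headD_Aw n), delWord_zero_Aw, mul_zero, add_zero]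

lemma delWord_zero_Aw_succ_append_ez (m : ℕ) (t : List Ltr) :
    delWord 0 (Aw (m + 1) ++ 2 :: t) =
      wd (Bw m ++ 2 :: t) + wd (Aw (m + 1)) * delWord 0 (2 :: t) := by
  induction m with
  | zero =>
    rw [Aw, Aw, List.cons_append, List.cons_append, List.nil_append,
      delWord_zero_cons_of_ne_ez 1 _ (by decide) (by simp), delWord_zero_e0_ez]
    simp only [mul_add, ← mul_assoc, ← wd_append, Bw, Aw]
    rfl
  | succ k ih =>
    rw [Aw, List.cons_append, List.cons_append,
      delWord_zero_cons_of_ne_ez 1 _ (by decide) (by simp),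
      delWord_zero_cons_of_ne_ez 0 _ (by decide) (by simp [Aw]), ih]
    simp only [mul_add, ← mul_assoc, ← wd_append, Bw, Aw]
    rfl

lemma delWord_zero_Abar_succ_append_ez (s : ℕ) (t : List Ltr) :
    delWord 0 (Abar (s + 1) ++ 2 :: t) =
      wd (Abar (s + 1) ++ t) + wd (Abar (s + 1)) * delWord 0 (2 :: t) := by
  induction s with
  | zero =>
    rw [Abar, Abar, List.cons_append, List.cons_append, List.nil_append,
      delWord_zero_cons_of_ne_ez 0 _ (by decide) (by simp), delWord_zero_e1_ez]
    simp only [mul_add, ← mul_assoc, ← wd_append]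
    rw [add_comm]
    rfl
  | succ k ih =>
    rw [Abar, List.cons_append, List.cons_append,
      delWord_zero_cons_of_ne_ez 0 _ (by decide) (by simp),
      delWord_zero_cons_of_ne_ez 1 _ (by decide) (by simp [Abar]), ih]
    simp only [mul_add, ← mul_assoc, ← wd_append]
    rfl

lemma delWord_zero_ez_Aw_succ_append_ez_Aw (s n : ℕ) :
    delWord 0 (2 :: (Aw (s + 1) ++ 2 :: Aw n)) =
      -wd (Aw (s + 1) ++ 2 :: Aw n) + wd (2 :: (Bw s ++ 2 :: Aw n))
        - wd (2 :: Aw (s + 1 + n)) := by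
  rw [delWord_zero_ez_cons_of_headD_eq_one _ rfl, delWord_zero_Aw_succ_append_ez,
    delWord_zero_ez_Aw, Aw_add (s + 1) n]
  simp only [mul_add, mul_neg, ← wd_append, List.cons_append]
  abel

lemma delWord_zero_ez_Abar_succ_append_ez_Aw (s n : ℕ) :
    delWord 0 (2 :: (Abar (s + 1) ++ 2 :: Aw n)) = -wd (2 :: (Bw s ++ 2 :: Aw n)) := by
  have hAbar : delWord 0 (Abar (s + 1) ++ 2 :: Aw n) = 0 := by
    rw [delWord_zero_Abar_succ_append_ez, delWord_zero_ez_Aw, mul_neg, ← wd_append,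
      add_neg_cancel]
  change delWord 0 (2 :: 0 :: (1 :: Abar s ++ 2 :: Aw n)) = _
  rw [delWord_zero_ez_e0]
  change wd [2] * delWord 0 (Abar (s + 1) ++ 2 :: Aw n) - _ = _
  rw [hAbar, mul_zero, zero_sub, one_cons_Abar]

lemma delWord_zero_ez_Aw_append_add_ez_Abar_append (s n : ℕ) :
    delWord 0 (2 :: (Aw s ++ 2 :: Aw n)) + delWord 0 (2 :: (Abar s ++ 2 :: Aw n)) =
      -wd (Aw s ++ 2 :: Aw n) - wd (2 :: Aw (s + n)) := by
  cases s with
  | zero =>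
    simp only [Aw, Abar, List.nil_append, zero_add]
    rw [delWord_zero_ez_ez, delWord_zero_ez_Aw, mul_neg, ← wd_append, List.singleton_append]
    abel
  | succ s =>
    rw [delWord_zero_ez_Aw_succ_append_ez_Aw, delWord_zero_ez_Abar_succ_append_ez_Aw]
    abel

theorem del0_middle_general (s n : ℕ) :
    (∀ m : ℕ, 1 ≤ m →
      del 0 (wd (Aw m ++ ezw ++ Aw s ++ ezw ++ Aw n)
          + wd (Aw m ++ ezw ++ Abar s ++ ezw ++ Aw n)) =
        wd (Bw (m - 1) ++ ezw ++ Aw s ++ ezw ++ Aw n)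
          + wd (Bw (m - 1) ++ ezw ++ Abar s ++ ezw ++ Aw n)
          - wd (Aw (s + m) ++ ezw ++ Aw n) - wd (Aw m ++ ezw ++ Aw (s + n))) ∧
    del 0 (wd (ezw ++ Aw s ++ ezw ++ Aw n) + wd (ezw ++ Abar s ++ ezw ++ Aw n)) =
      -wd (Aw s ++ ezw ++ Aw n) - wd (ezw ++ Aw (s + n)) := by
  simp only [ezw, List.append_assoc, List.cons_append, List.nil_append, map_add, del_wd]
  constructor
  · intro m hm
    obtain ⟨k, rfl⟩ : ∃ k, m = k + 1 := ⟨m - 1, by omega⟩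
    rw [delWord_zero_Aw_succ_append_ez, delWord_zero_Aw_succ_append_ez, add_add_add_comm,
      ← mul_add, delWord_zero_ez_Aw_append_add_ez_Abar_append, Nat.add_sub_cancel,
      Nat.add_comm s (k + 1), Aw_add (k + 1) s]
    simp only [mul_sub, mul_neg, ← wd_append, List.append_assoc]
    abel
  · exact delWord_zero_ez_Aw_append_add_ez_Abar_append s n

/-- `∂_{z,0}(A_m e_z (A_s + Ā_s) e_z A_n)`, in the cases `m > 0` and `m = 0`. -/
theorem del0_middle (s n : ℕ) (hs : 1 ≤ s) :
    (∀ m : ℕ, 1 ≤ m →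
      del 0 (wd (Aw m ++ ezw ++ Aw s ++ ezw ++ Aw n)
          + wd (Aw m ++ ezw ++ Abar s ++ ezw ++ Aw n)) =
        wd (Bw (m - 1) ++ ezw ++ Aw s ++ ezw ++ Aw n)
          + wd (Bw (m - 1) ++ ezw ++ Abar s ++ ezw ++ Aw n)
          - wd (Aw (s + m) ++ ezw ++ Aw n) - wd (Aw m ++ ezw ++ Aw (s + n))) ∧
    del 0 (wd (ezw ++ Aw s ++ ezw ++ Aw n) + wd (ezw ++ Abar s ++ ezw ++ Aw n)) =
      -wd (Aw s ++ ezw ++ Aw n) - wd (ezw ++ Aw (s + n)) :=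
  del0_middle_general s n

end
end
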